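/- arXiv:nlin/0306036 — 4 statements merged into one kernel-verified Lean document; each statement's English description precedes it below -/
import Mathlib

section
/- Let φ ∈ ℝ^m. The following three conditions are equivalent: (i) φ is a summational invariant; (ii) ⟨φ, Q(F,G)⟩ = 0 for all F, G ∈ ℝ^m; (iii) ⟨φ, Q(F,F)⟩ = 0 for all F ∈ ℝ^m. -/
open Finset

/-- The discrete Boltzmann collision operator `Q`.
`A i j k l` stands for the transition rate `A^{ij}_{kl}`. -/
noncomputable def Qop {m : ℕ} (α : Fin m → ℝ) (A : Fin m → Fin m → Fin m → Fin m → ℝ)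
    (F G : Fin m → ℝ) : Fin m → ℝ := fun i =>
  (1 / (2 * α i)) *
    ∑ j, ∑ k, ∑ l,
      (A i j k l * (F k * G l + F l * G k) - A k l i j * (F i * G j + F j * G i))

/-- `φ` is a summational invariant. -/
def SummInv {m : ℕ} (α : Fin m → ℝ) (A : Fin m → Fin m → Fin m → Fin m → ℝ)
    (φ : Fin m → ℝ) : Prop :=
  ∀ i j k l, A i j k l * (φ i / α i + φ j / α j - φ k / α k - φ l / α l) = 0

/-- Multiplication by `Λ^{1/2}`, where `Λ = diag (M i / α i)`. -/
noncomputable def sqrtLam {m : ℕ} (α M : Fin m → ℝ) (f : Fin m → ℝ) : Fin m → ℝ :=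
  fun i => Real.sqrt (M i / α i) * f i

/-- Multiplication by `Λ^{-1/2}`, where `Λ = diag (M i / α i)`. -/
noncomputable def invSqrtLam {m : ℕ} (α M : Fin m → ℝ) (f : Fin m → ℝ) : Fin m → ℝ :=
  fun i => (Real.sqrt (M i / α i))⁻¹ * f i

/-- The linearized collision operator `L f = -2 Λ^{-1/2} Q (M, Λ^{1/2} f)`. -/
noncomputable def Lop {m : ℕ} (α : Fin m → ℝ) (A : Fin m → Fin m → Fin m → Fin m → ℝ)
    (M : Fin m → ℝ) (f : Fin m → ℝ) : Fin m → ℝ :=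
  (-2 : ℝ) • invSqrtLam α M (Qop α A M (sqrtLam α M f))

/-- The quadratic operator `Γ (f, g) = Λ^{-1/2} Q (Λ^{1/2} f, Λ^{1/2} g)`. -/
noncomputable def Gam {m : ℕ} (α : Fin m → ℝ) (A : Fin m → Fin m → Fin m → Fin m → ℝ)
    (M : Fin m → ℝ) (f g : Fin m → ℝ) : Fin m → ℝ :=
  invSqrtLam α M (Qop α A (sqrtLam α M f) (sqrtLam α M g))


lemma sum4_prod {m : ℕ} (f : Fin m → Fin m → Fin m → Fin m → ℝ) :
    ∑ i, ∑ j, ∑ k, ∑ l, f i j k l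
      = ∑ p : (Fin m × Fin m) × (Fin m × Fin m), f p.1.1 p.1.2 p.2.1 p.2.2 := by
  simp [Fintype.sum_prod_type]

lemma swap_pair {m : ℕ} (f : Fin m → Fin m → Fin m → Fin m → ℝ) :
    ∑ i, ∑ j, ∑ k, ∑ l, f i j k l = ∑ i, ∑ j, ∑ k, ∑ l, f k l i j := by
  rw [sum4_prod, sum4_prod]
  exact Fintype.sum_equiv (Equiv.prodComm _ _) _ _ (fun p => rfl)

lemma swap_ij {m : ℕ} (f : Fin m → Fin m → Fin m → Fin m → ℝ) :
    ∑ i, ∑ j, ∑ k, ∑ l, f i j k l = ∑ i, ∑ j, ∑ k, ∑ l, f j i k l :=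
  Finset.sum_comm

lemma swap_kl {m : ℕ} (f : Fin m → Fin m → Fin m → Fin m → ℝ) :
    ∑ i, ∑ j, ∑ k, ∑ l, f i j k l = ∑ i, ∑ j, ∑ k, ∑ l, f i j l k := by
  refine Finset.sum_congr rfl fun i _ => Finset.sum_congr rfl fun j _ => ?_
  exact Finset.sum_comm

lemma sum4_congr {m : ℕ} {f g : Fin m → Fin m → Fin m → Fin m → ℝ}
    (h : ∀ i j k l, f i j k l = g i j k l) :
    ∑ i, ∑ j, ∑ k, ∑ l, f i j k l = ∑ i, ∑ j, ∑ k, ∑ l, g i j k l := by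
  simp only [h]

lemma key {m : ℕ} (α : Fin m → ℝ) (hα : ∀ i, 0 < α i)
    (A : Fin m → Fin m → Fin m → Fin m → ℝ)
    (hsym1 : ∀ i j k l, A i j l k = A i j k l)
    (hsym2 : ∀ i j k l, A j i k l = A i j k l)
    (hsym3 : ∀ i j k l, A k l i j = A i j k l)
    (φ F G : Fin m → ℝ) :
    ∑ i, φ i * Qop α A F G i
      = -(4 : ℝ)⁻¹ * ∑ i, ∑ j, ∑ k, ∑ l,
          A i j k l * (F i * G j + F j * G i) *
            (φ i / α i + φ j / α j - φ k / α k - φ l / α l) := by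
  set y : Fin m → ℝ := fun i => φ i / α i with hy
  set S : Fin m → Fin m → ℝ := fun i j => F i * G j + F j * G i with hS
  have h0 : ∑ i, φ i * Qop α A F G i
      = (∑ i, ∑ j, ∑ k, ∑ l, (y i / 2) * (A i j k l * S k l))
        - ∑ i, ∑ j, ∑ k, ∑ l, (y i / 2) * (A k l i j * S i j) := by
    rw [← Finset.sum_sub_distrib]
    refine Finset.sum_congr rfl fun i _ => ?_
    rw [← Finset.sum_sub_distrib]
    simp only [Qop]
    have hc : φ i * (1 / (2 * α i)) = y i / 2 := by
      simp only [hy]; field_simp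
    rw [← mul_assoc, hc, Finset.mul_sum]
    refine Finset.sum_congr rfl fun j _ => ?_
    rw [← Finset.sum_sub_distrib, Finset.mul_sum]
    refine Finset.sum_congr rfl fun k _ => ?_
    rw [← Finset.sum_sub_distrib, Finset.mul_sum]
    refine Finset.sum_congr rfl fun l _ => ?_
    simp only [hS]; ring
  have hT1 : (∑ i, ∑ j, ∑ k, ∑ l, (y i / 2) * (A i j k l * S k l))
      = ∑ i, ∑ j, ∑ k, ∑ l, A i j k l * S i j * (y k / 2) := by
    rw [swap_pair (fun i j k l => (y i / 2) * (A i j k l * S k l))]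
    exact sum4_congr fun i j k l => by rw [hsym3]; ring
  have hT2 : (∑ i, ∑ j, ∑ k, ∑ l, (y i / 2) * (A k l i j * S i j))
      = ∑ i, ∑ j, ∑ k, ∑ l, A i j k l * S i j * (y i / 2) := by
    exact sum4_congr fun i j k l => by rw [hsym3]; ring
  have hV1 : ∑ i, φ i * Qop α A F G i
      = ∑ i, ∑ j, ∑ k, ∑ l, A i j k l * S i j * ((y k - y i) / 2) := by
    rw [h0, hT1, hT2, ← Finset.sum_sub_distrib]
    refine Finset.sum_congr rfl fun i _ => ?_
    rw [← Finset.sum_sub_distrib]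
    refine Finset.sum_congr rfl fun j _ => ?_
    rw [← Finset.sum_sub_distrib]
    refine Finset.sum_congr rfl fun k _ => ?_
    rw [← Finset.sum_sub_distrib]
    exact Finset.sum_congr rfl fun l _ => by ring
  have hV2 : (∑ i, ∑ j, ∑ k, ∑ l, A i j k l * S i j * ((y k - y i) / 2))
      = ∑ i, ∑ j, ∑ k, ∑ l, A i j k l * S i j * ((y k - y j) / 2) := by
    rw [swap_ij (fun i j k l => A i j k l * S i j * ((y k - y i) / 2))]
    exact sum4_congr fun i j k l => by rw [hsym2]; simp only [hS]; ring
  have hV3 : (∑ i, ∑ j, ∑ k, ∑ l, A i j k l * S i j * ((y k - y i) / 2))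
      = ∑ i, ∑ j, ∑ k, ∑ l, A i j k l * S i j * ((y l - y i) / 2) := by
    rw [swap_kl (fun i j k l => A i j k l * S i j * ((y k - y i) / 2))]
    exact sum4_congr fun i j k l => by rw [hsym1]
  have hV4 : (∑ i, ∑ j, ∑ k, ∑ l, A i j k l * S i j * ((y k - y i) / 2))
      = ∑ i, ∑ j, ∑ k, ∑ l, A i j k l * S i j * ((y l - y j) / 2) := by
    rw [swap_ij (fun i j k l => A i j k l * S i j * ((y k - y i) / 2))]
    rw [swap_kl (fun i j k l => A j i k l * S j i * ((y k - y j) / 2))]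
    exact sum4_congr fun i j k l => by rw [hsym1, hsym2]; simp only [hS]; ring
  have hsum : (∑ i, ∑ j, ∑ k, ∑ l, A i j k l * S i j * ((y k - y i) / 2))
      + (∑ i, ∑ j, ∑ k, ∑ l, A i j k l * S i j * ((y k - y j) / 2))
      + (∑ i, ∑ j, ∑ k, ∑ l, A i j k l * S i j * ((y l - y i) / 2))
      + (∑ i, ∑ j, ∑ k, ∑ l, A i j k l * S i j * ((y l - y j) / 2))
      = ∑ i, ∑ j, ∑ k, ∑ l, -(A i j k l * S i j * (y i + y j - y k - y l)) := by
    simp only [← Finset.sum_add_distrib]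
    exact sum4_congr fun i j k l => by ring
  simp only [Finset.sum_neg_distrib] at hsum
  have hE : (∑ i, ∑ j, ∑ k, ∑ l, A i j k l * S i j * (y i + y j - y k - y l))
      = ∑ i, ∑ j, ∑ k, ∑ l,
          A i j k l * (F i * G j + F j * G i) *
            (φ i / α i + φ j / α j - φ k / α k - φ l / α l) := rfl
  rw [← hE]
  linarith [hsum, hV1, hV2, hV3, hV4]

lemma key2 {m : ℕ} (α : Fin m → ℝ) (hα : ∀ i, 0 < α i)
    (A : Fin m → Fin m → Fin m → Fin m → ℝ)
    (hsym1 : ∀ i j k l, A i j l k = A i j k l)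
    (hsym2 : ∀ i j k l, A j i k l = A i j k l)
    (hsym3 : ∀ i j k l, A k l i j = A i j k l)
    (φ F G : Fin m → ℝ) :
    ∑ i, φ i * Qop α A F G i
      = (8 : ℝ)⁻¹ * ∑ i, ∑ j, ∑ k, ∑ l,
          A i j k l * ((F k * G l + F l * G k) - (F i * G j + F j * G i)) *
            (φ i / α i + φ j / α j - φ k / α k - φ l / α l) := by
  have hk := key α hα A hsym1 hsym2 hsym3 φ F G
  have hswap : (∑ i, ∑ j, ∑ k, ∑ l,
        A i j k l * (F i * G j + F j * G i) *
          (φ i / α i + φ j / α j - φ k / α k - φ l / α l))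
      = -∑ i, ∑ j, ∑ k, ∑ l,
          A i j k l * (F k * G l + F l * G k) *
            (φ i / α i + φ j / α j - φ k / α k - φ l / α l) := by
    rw [swap_pair (fun i j k l => A i j k l * (F i * G j + F j * G i) *
      (φ i / α i + φ j / α j - φ k / α k - φ l / α l))]
    rw [show (-∑ i, ∑ j, ∑ k, ∑ l,
        A i j k l * (F k * G l + F l * G k) *
          (φ i / α i + φ j / α j - φ k / α k - φ l / α l))
      = ∑ i, ∑ j, ∑ k, ∑ l, -(A i j k l * (F k * G l + F l * G k) *
          (φ i / α i + φ j / α j - φ k / α k - φ l / α l)) from by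
        simp only [Finset.sum_neg_distrib]]
    exact sum4_congr fun i j k l => by rw [hsym3]; ring
  have hsub : (∑ i, ∑ j, ∑ k, ∑ l,
        A i j k l * ((F k * G l + F l * G k) - (F i * G j + F j * G i)) *
          (φ i / α i + φ j / α j - φ k / α k - φ l / α l))
      = (∑ i, ∑ j, ∑ k, ∑ l, A i j k l * (F k * G l + F l * G k) *
            (φ i / α i + φ j / α j - φ k / α k - φ l / α l))
        - ∑ i, ∑ j, ∑ k, ∑ l, A i j k l * (F i * G j + F j * G i) *
            (φ i / α i + φ j / α j - φ k / α k - φ l / α l) := by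
    rw [← Finset.sum_sub_distrib]
    refine Finset.sum_congr rfl fun i _ => ?_
    rw [← Finset.sum_sub_distrib]
    refine Finset.sum_congr rfl fun j _ => ?_
    rw [← Finset.sum_sub_distrib]
    refine Finset.sum_congr rfl fun k _ => ?_
    rw [← Finset.sum_sub_distrib]
    exact Finset.sum_congr rfl fun l _ => by ring
  rw [hk, hsub]
  linarith [hswap]

/-- for `φ ∈ ℝ^m` the following are equivalent:
(i) `φ` is a summational invariant; (ii) `⟨φ, Q(F,G)⟩ = 0` for all `F, G`;
(iii) `⟨φ, Q(F,F)⟩ = 0` for all `F`. -/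
theorem summInv_iff_orthogonal_Q {m : ℕ} (hm : 1 ≤ m)
    (α : Fin m → ℝ) (hα : ∀ i, 0 < α i)
    (A : Fin m → Fin m → Fin m → Fin m → ℝ) (hA : ∀ i j k l, 0 ≤ A i j k l)
    (hsym1 : ∀ i j k l, A i j l k = A i j k l)
    (hsym2 : ∀ i j k l, A j i k l = A i j k l)
    (hsym3 : ∀ i j k l, A k l i j = A i j k l)
    (φ : Fin m → ℝ) :
    (SummInv α A φ ↔ ∀ F G : Fin m → ℝ, ∑ i, φ i * Qop α A F G i = 0) ∧
    (SummInv α A φ ↔ ∀ F : Fin m → ℝ, ∑ i, φ i * Qop α A F F i = 0) := by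
  have I1 : SummInv α A φ → ∀ F G : Fin m → ℝ, ∑ i, φ i * Qop α A F G i = 0 := by
    intro h F G
    rw [key α hα A hsym1 hsym2 hsym3 φ F G]
    have hz : (∑ i, ∑ j, ∑ k, ∑ l,
        A i j k l * (F i * G j + F j * G i) *
          (φ i / α i + φ j / α j - φ k / α k - φ l / α l)) = 0 := by
      refine Finset.sum_eq_zero fun i _ => Finset.sum_eq_zero fun j _ =>
        Finset.sum_eq_zero fun k _ => Finset.sum_eq_zero fun l _ => ?_
      have hh := h i j k l
      calc A i j k l * (F i * G j + F j * G i) *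
            (φ i / α i + φ j / α j - φ k / α k - φ l / α l)
          = (F i * G j + F j * G i) *
            (A i j k l * (φ i / α i + φ j / α j - φ k / α k - φ l / α l)) := by ring
        _ = 0 := by rw [hh, mul_zero]
    rw [hz, mul_zero]
  have I3 : (∀ F : Fin m → ℝ, ∑ i, φ i * Qop α A F F i = 0) → SummInv α A φ := by
    intro h i j k l
    set F : Fin m → ℝ := fun i => Real.exp (φ i / α i) with hF
    have hFF : ∀ a b : Fin m, F a * F b = Real.exp (φ a / α a + φ b / α b) := by
      intro a b; simp only [hF]; rw [← Real.exp_add]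
    have hnp : ∀ a b c d : Fin m,
        A a b c d * ((F c * F d + F d * F c) - (F a * F b + F b * F a)) *
          (φ a / α a + φ b / α b - φ c / α c - φ d / α d) ≤ 0 := by
      intro a b c d
      rw [hFF, hFF, hFF, hFF]
      rcases le_total (φ c / α c + φ d / α d) (φ a / α a + φ b / α b) with hle | hle
      · have he := Real.exp_le_exp.2 hle
        have he2 : Real.exp (φ d / α d + φ c / α c) = Real.exp (φ c / α c + φ d / α d) := by
          rw [add_comm]
        have he3 : Real.exp (φ b / α b + φ a / α a) = Real.exp (φ a / α a + φ b / α b) := by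
          rw [add_comm]
        have hX : (Real.exp (φ c / α c + φ d / α d) + Real.exp (φ d / α d + φ c / α c) -
            (Real.exp (φ a / α a + φ b / α b) + Real.exp (φ b / α b + φ a / α a))) ≤ 0 := by
          linarith
        have hY : 0 ≤ φ a / α a + φ b / α b - φ c / α c - φ d / α d := by linarith
        exact mul_nonpos_iff.mpr (Or.inr ⟨mul_nonpos_iff.mpr (Or.inl ⟨hA a b c d, hX⟩), hY⟩)
      · have he := Real.exp_le_exp.2 hle
        have he2 : Real.exp (φ d / α d + φ c / α c) = Real.exp (φ c / α c + φ d / α d) := by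
          rw [add_comm]
        have he3 : Real.exp (φ b / α b + φ a / α a) = Real.exp (φ a / α a + φ b / α b) := by
          rw [add_comm]
        have hX : 0 ≤ (Real.exp (φ c / α c + φ d / α d) + Real.exp (φ d / α d + φ c / α c) -
            (Real.exp (φ a / α a + φ b / α b) + Real.exp (φ b / α b + φ a / α a))) := by
          linarith
        have hY : φ a / α a + φ b / α b - φ c / α c - φ d / α d ≤ 0 := by linarith
        exact mul_nonpos_iff.mpr (Or.inl ⟨mul_nonneg (hA a b c d) hX, hY⟩)
    have h8 := h F
    rw [key2 α hα A hsym1 hsym2 hsym3 φ F F] at h8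
    have hZ : (∑ a, ∑ b, ∑ c, ∑ d,
        A a b c d * ((F c * F d + F d * F c) - (F a * F b + F b * F a)) *
          (φ a / α a + φ b / α b - φ c / α c - φ d / α d)) = 0 := by linarith
    have e4 := (Finset.sum_eq_zero_iff_of_nonpos (fun a _ =>
      Finset.sum_nonpos fun b _ => Finset.sum_nonpos fun c _ =>
        Finset.sum_nonpos fun d _ => hnp a b c d)).1 hZ i (Finset.mem_univ i)
    have e3 := (Finset.sum_eq_zero_iff_of_nonpos (fun b _ =>
      Finset.sum_nonpos fun c _ => Finset.sum_nonpos fun d _ => hnp i b c d)).1 e4 j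
        (Finset.mem_univ j)
    have e2 := (Finset.sum_eq_zero_iff_of_nonpos (fun c _ =>
      Finset.sum_nonpos fun d _ => hnp i j c d)).1 e3 k (Finset.mem_univ k)
    have e1 := (Finset.sum_eq_zero_iff_of_nonpos (fun d _ => hnp i j k d)).1 e2 l
      (Finset.mem_univ l)
    rw [hFF, hFF, hFF, hFF] at e1
    rcases eq_or_ne (A i j k l) 0 with hA0 | hA0
    · rw [hA0, zero_mul]
    · rcases mul_eq_zero.1 e1 with h1 | h1
      · rcases mul_eq_zero.1 h1 with h2 | h2
        · exact absurd h2 hA0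
        · have he2 : Real.exp (φ l / α l + φ k / α k) = Real.exp (φ k / α k + φ l / α l) := by
            rw [add_comm]
          have he3 : Real.exp (φ j / α j + φ i / α i) = Real.exp (φ i / α i + φ j / α j) := by
            rw [add_comm]
          have hexp : Real.exp (φ k / α k + φ l / α l) = Real.exp (φ i / α i + φ j / α j) := by
            linarith
          have huv := Real.exp_injective hexp
          rw [show (φ i / α i + φ j / α j - φ k / α k - φ l / α l) = 0 from by linarith,
            mul_zero]
      · rw [show (φ i / α i + φ j / α j - φ k / α k - φ l / α l) = 0 from by linarith,
          mul_zero]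
  exact ⟨⟨I1, fun h => I3 fun F => h F F⟩, ⟨fun h F => I1 h F F, I3⟩⟩
end

section
/- (Lemma 4) For all f, g ∈ ℝ^m, ⟨f, Lg⟩ = (1/8) Σ_{i,j,k,l} A^{ij}_{kl} (M_i M_j + M_k M_l) (f_i* + f_j* − f_k* − f_l*)(g_i* + g_j* − g_k* − g_l*), where f_i* = f_i/√(α_i M_i) and g_i* = g_i/√(α_i M_i). -/
open Finset

/-!
Substituting `Λ^{1/2} g = (M_j g_j*)_j` into `Q`, the Maxwellian relation
`A^{ij}_{kl} M_i M_j = A^{ij}_{kl} M_k M_l` lets both halves of each collision term carry the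
symmetric weight `(M_i M_j + M_k M_l) / 2`, so that
`⟨f, Lg⟩ = Σ K_{ijkl} f_i* (g_i* + g_j* - g_k* - g_l*)` with `K` invariant under `i ↔ j` and
`(i, j) ↔ (k, l)`. Averaging `f_i*` over these symmetries (the last two flip the sign of the
`g`-factor) replaces it by `(f_i* + f_j* - f_k* - f_l*) / 4`.
-/

section Symmetrization

variable {ι R : Type*} [Fintype ι]

def collisionDiff [AddCommGroup R] (x : ι → R) (i j k l : ι) : R := x i + x j - x k - x l

theorem sum_swap_pairs [AddCommMonoid R] (F : ι → ι → ι → ι → R) :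
    ∑ i, ∑ j, ∑ k, ∑ l, F i j k l = ∑ i, ∑ j, ∑ k, ∑ l, F k l i j := by
  have hprod : ∀ G : ι → ι → ι → ι → R,
      ∑ i, ∑ j, ∑ k, ∑ l, G i j k l = ∑ p : ι × ι, ∑ q : ι × ι, G p.1 p.2 q.1 q.2 := fun G => by
    simp only [Fintype.sum_prod_type]
  rw [hprod, hprod, sum_comm]

theorem four_mul_sum_mul_collisionDiff [CommRing R] (K : ι → ι → ι → ι → R)
    (hK_swap : ∀ i j k l, K j i k l = K i j k l) (hK_pairs : ∀ i j k l, K k l i j = K i j k l)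
    (x y : ι → R) :
    4 * ∑ i, ∑ j, ∑ k, ∑ l, K i j k l * x i * collisionDiff y i j k l =
      ∑ i, ∑ j, ∑ k, ∑ l, K i j k l * collisionDiff x i j k l * collisionDiff y i j k l := by
  set T : ι → ι → ι → ι → R := fun i j k l => K i j k l * x i * collisionDiff y i j k l
  have hsplit : ∀ i j k l, K i j k l * collisionDiff x i j k l * collisionDiff y i j k l =
      T i j k l + T j i k l + T k l i j + T l k i j := by
    intro i j k l
    simp only [T, collisionDiff]
    rw [hK_swap i j k l, hK_swap k l i j, hK_pairs i j k l]
    ring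
  have hT_swap : ∑ i, ∑ j, ∑ k, ∑ l, T j i k l = ∑ i, ∑ j, ∑ k, ∑ l, T i j k l := sum_comm
  have hT_pairs := sum_swap_pairs T
  have hT_both := sum_swap_pairs fun i j k l => T j i k l
  show 4 * ∑ i, ∑ j, ∑ k, ∑ l, T i j k l = _
  simp only [hsplit, sum_add_distrib]
  rw [← hT_pairs, ← hT_both, hT_swap]
  ring

end Symmetrization

theorem Real.sqrt_div_eq_div_sqrt_mul {a b : ℝ} (ha : 0 ≤ a) (hb : 0 ≤ b) :
    √(b / a) = b / √(a * b) := by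
  rw [Real.sqrt_div' b ha, Real.sqrt_mul' a hb, mul_comm, ← div_div, Real.div_sqrt]

section Collision

variable {m : ℕ} (α : Fin m → ℝ) (A : Fin m → Fin m → Fin m → Fin m → ℝ) (M : Fin m → ℝ)

theorem sqrtLam_eq (hα : ∀ i, 0 ≤ α i) (hM : ∀ i, 0 ≤ M i) (g : Fin m → ℝ) :
    sqrtLam α M g = fun i => M i * (g i / √(α i * M i)) := by
  funext i
  rw [sqrtLam, Real.sqrt_div_eq_div_sqrt_mul (hα i) (hM i)]
  ring

theorem Qop_mul_apply_of_maxwellian (hsym3 : ∀ i j k l, A k l i j = A i j k l)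
    (hMax : ∀ i j k l, A i j k l * (M i * M j - M k * M l) = 0) (y : Fin m → ℝ) (i : Fin m) :
    Qop α A M (fun j => M j * y j) i = -(1 / (2 * α i)) *
      ∑ j, ∑ k, ∑ l, A i j k l * ((M i * M j + M k * M l) / 2) * collisionDiff y i j k l := by
  simp only [Qop, neg_mul, ← mul_neg, ← sum_neg_distrib]
  congr 1
  refine sum_congr rfl fun j _ => sum_congr rfl fun k _ => sum_congr rfl fun l _ => ?_
  rw [hsym3 i j k l, collisionDiff]
  linear_combination -(y i + y j + y k + y l) / 2 * hMax i j k l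

theorem Lop_apply_of_maxwellian (hα : ∀ i, 0 ≤ α i) (hM : ∀ i, 0 ≤ M i)
    (hsym3 : ∀ i j k l, A k l i j = A i j k l)
    (hMax : ∀ i j k l, A i j k l * (M i * M j - M k * M l) = 0) (g : Fin m → ℝ) (i : Fin m) :
    Lop α A M g i = (√(α i * M i))⁻¹ * ∑ j, ∑ k, ∑ l, A i j k l *
      ((M i * M j + M k * M l) / 2) * collisionDiff (fun j => g j / √(α j * M j)) i j k l := by
  have hinv : √(α i * M i) / M i / α i = (√(α i * M i))⁻¹ := by
    rw [div_div, mul_comm (M i), Real.sqrt_div_self]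
  rw [Lop, sqrtLam_eq α M hα hM, Pi.smul_apply, invSqrtLam, smul_eq_mul,
    Qop_mul_apply_of_maxwellian α A M hsym3 hMax, Real.sqrt_div_eq_div_sqrt_mul (hα i) (hM i),
    inv_div]
  linear_combination (∑ j, ∑ k, ∑ l, A i j k l * ((M i * M j + M k * M l) / 2) *
    collisionDiff (fun j => g j / √(α j * M j)) i j k l) * hinv

end Collision

theorem inner_Lop_eq_general {m : ℕ}
    (α : Fin m → ℝ) (hα : ∀ i, 0 < α i)
    (A : Fin m → Fin m → Fin m → Fin m → ℝ)
    (hsym2 : ∀ i j k l, A j i k l = A i j k l)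
    (hsym3 : ∀ i j k l, A k l i j = A i j k l)
    (M : Fin m → ℝ) (hM : ∀ i, 0 < M i)
    (hMax : ∀ i j k l, A i j k l * (M i * M j - M k * M l) = 0)
    (f g : Fin m → ℝ) :
    ∑ i, f i * Lop α A M g i =
      (1 / 8) * ∑ i, ∑ j, ∑ k, ∑ l,
        A i j k l * (M i * M j + M k * M l) *
          ((f i / Real.sqrt (α i * M i) + f j / Real.sqrt (α j * M j)
              - f k / Real.sqrt (α k * M k) - f l / Real.sqrt (α l * M l)) *
           (g i / Real.sqrt (α i * M i) + g j / Real.sqrt (α j * M j)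
              - g k / Real.sqrt (α k * M k) - g l / Real.sqrt (α l * M l))) := by
  set x : Fin m → ℝ := fun i => f i / √(α i * M i)
  set y : Fin m → ℝ := fun i => g i / √(α i * M i)
  set K : Fin m → Fin m → Fin m → Fin m → ℝ := fun i j k l =>
    A i j k l * ((M i * M j + M k * M l) / 2)
  have hK_swap : ∀ i j k l, K j i k l = K i j k l := fun i j k l => by
    simp only [K, hsym2]; ring
  have hK_pairs : ∀ i j k l, K k l i j = K i j k l := fun i j k l => by
    simp only [K, hsym3]; ring
  calc ∑ i, f i * Lop α A M g i
      = ∑ i, ∑ j, ∑ k, ∑ l, K i j k l * x i * collisionDiff y i j k l := by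
        refine sum_congr rfl fun i _ => ?_
        rw [Lop_apply_of_maxwellian α A M (fun i => (hα i).le) (fun i => (hM i).le) hsym3 hMax,
          ← mul_assoc]
        simp only [mul_sum]
        refine sum_congr rfl fun j _ => sum_congr rfl fun k _ => sum_congr rfl fun l _ => ?_
        simp only [K, x, y]
        ring
    _ = 1 / 4 * ∑ i, ∑ j, ∑ k, ∑ l,
          K i j k l * collisionDiff x i j k l * collisionDiff y i j k l := by
        rw [← four_mul_sum_mul_collisionDiff K hK_swap hK_pairs]; ring
    _ = _ := by
        simp only [mul_sum]
        refine sum_congr rfl fun i _ => sum_congr rfl fun j _ =>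
          sum_congr rfl fun k _ => sum_congr rfl fun l _ => ?_
        simp only [K, x, y, collisionDiff]
        ring

/-- Lemma 4: `⟨f, Lg⟩ = (1/8) Σ_{ijkl} A^{ij}_{kl} (M_i M_j + M_k M_l)
(f_i* + f_j* − f_k* − f_l*)(g_i* + g_j* − g_k* − g_l*)` where `f_i* = f_i/√(α_i M_i)`. -/
theorem inner_Lop_eq {m : ℕ} (hm : 1 ≤ m)
    (α : Fin m → ℝ) (hα : ∀ i, 0 < α i)
    (A : Fin m → Fin m → Fin m → Fin m → ℝ) (hA : ∀ i j k l, 0 ≤ A i j k l)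
    (hsym1 : ∀ i j k l, A i j l k = A i j k l)
    (hsym2 : ∀ i j k l, A j i k l = A i j k l)
    (hsym3 : ∀ i j k l, A k l i j = A i j k l)
    (M : Fin m → ℝ) (hM : ∀ i, 0 < M i)
    (hMax : ∀ i j k l, A i j k l * (M i * M j - M k * M l) = 0)
    (f g : Fin m → ℝ) :
    ∑ i, f i * Lop α A M g i =
      (1 / 8) * ∑ i, ∑ j, ∑ k, ∑ l,
        A i j k l * (M i * M j + M k * M l) *
          ((f i / Real.sqrt (α i * M i) + f j / Real.sqrt (α j * M j)
              - f k / Real.sqrt (α k * M k) - f l / Real.sqrt (α l * M l)) *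
           (g i / Real.sqrt (α i * M i) + g j / Real.sqrt (α j * M j)
              - g k / Real.sqrt (α k * M k) - g l / Real.sqrt (α l * M l))) :=
  inner_Lop_eq_general α hα A hsym2 hsym3 M hM hMax f g
end

section
/- The linearized collision operator L is positive semi-definite: for all f ∈ ℝ^m, ⟨Lf, f⟩ ≥ 0. -/
open Finset

/-- the linearized collision operator `L` is positive semi-definite:
`⟨Lf, f⟩ ≥ 0` for all `f ∈ ℝ^m`. -/
theorem Lop_posSemidef {m : ℕ} (hm : 1 ≤ m)
    (α : Fin m → ℝ) (hα : ∀ i, 0 < α i)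
    (A : Fin m → Fin m → Fin m → Fin m → ℝ) (hA : ∀ i j k l, 0 ≤ A i j k l)
    (hsym1 : ∀ i j k l, A i j l k = A i j k l)
    (hsym2 : ∀ i j k l, A j i k l = A i j k l)
    (hsym3 : ∀ i j k l, A k l i j = A i j k l)
    (M : Fin m → ℝ) (hM : ∀ i, 0 < M i)
    (hMax : ∀ i j k l, A i j k l * (M i * M j - M k * M l) = 0)
    (f : Fin m → ℝ) :
    0 ≤ ∑ i, Lop α A M f i * f i := by
  set s : Fin m → ℝ := fun i => Real.sqrt (M i / α i) with hs_def
  have hspos : ∀ i, 0 < s i := fun i => Real.sqrt_pos.2 (div_pos (hM i) (hα i))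
  have hs2 : ∀ i, s i * s i * α i = M i := by
    intro i
    have h : s i * s i = M i / α i := Real.mul_self_sqrt (div_pos (hM i) (hα i)).le
    rw [h]; exact div_mul_cancel₀ _ (hα i).ne'
  obtain ⟨c, hMc, hcoef⟩ : ∃ c : Fin m → ℝ, (∀ i, M i * c i = s i * f i) ∧
      (∀ i, -2 * ((s i)⁻¹ * (1 / (2 * α i))) * f i = -(c i)) := by
    refine ⟨fun i => s i * f i / M i, fun i => ?_, fun i => ?_⟩
    · show M i * (s i * f i / M i) = s i * f i
      rw [← mul_div_assoc]
      exact mul_div_cancel_left₀ _ (hM i).ne'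
    · simp only
      rw [← hs2 i]
      field_simp [(hspos i).ne', (hα i).ne']
  set P : Fin m → Fin m → Fin m → Fin m → ℝ :=
    fun i j k l => A i j k l * (M i * M j) * c i * (c i + c j - c k - c l) with hP_def
  have step1 : ∑ i, Lop α A M f i * f i = ∑ i, ∑ j, ∑ k, ∑ l, P i j k l := by
    refine Finset.sum_congr rfl fun i _ => ?_
    show (-2 : ℝ) * ((s i)⁻¹ * ((1 / (2 * α i)) *
        ∑ j, ∑ k, ∑ l, (A i j k l * (M k * (s l * f l) + M l * (s k * f k))
          - A k l i j * (M i * (s j * f j) + M j * (s i * f i))))) * f i = _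
    rw [show (-2 : ℝ) * ((s i)⁻¹ * ((1 / (2 * α i)) *
        ∑ j, ∑ k, ∑ l, (A i j k l * (M k * (s l * f l) + M l * (s k * f k))
          - A k l i j * (M i * (s j * f j) + M j * (s i * f i)))) ) * f i
        = (-(c i)) * ∑ j, ∑ k, ∑ l, (A i j k l * (M k * (s l * f l) + M l * (s k * f k))
          - A k l i j * (M i * (s j * f j) + M j * (s i * f i))) from by
      rw [← hcoef i]; ring]
    rw [Finset.mul_sum]
    refine Finset.sum_congr rfl fun j _ => ?_
    rw [Finset.mul_sum]
    refine Finset.sum_congr rfl fun k _ => ?_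
    rw [Finset.mul_sum]
    refine Finset.sum_congr rfl fun l _ => ?_
    rw [hsym3 i j k l, ← hMc l, ← hMc k, ← hMc j, ← hMc i, hP_def]
    linear_combination (c i * (c k + c l)) * hMax i j k l
  rw [step1]
  have swap2 : ∀ g : Fin m → Fin m → Fin m → Fin m → ℝ,
      ∑ i, ∑ j, ∑ k, ∑ l, g i j k l = ∑ i, ∑ j, ∑ k, ∑ l, g j i l k := by
    intro g
    rw [Finset.sum_comm]
    exact Finset.sum_congr rfl fun i _ => Finset.sum_congr rfl fun j _ => Finset.sum_comm
  have rot : ∀ g : Fin m → Fin m → Fin m → Fin m → ℝ,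
      ∑ i, ∑ j, ∑ k, ∑ l, g i j k l = ∑ i, ∑ j, ∑ k, ∑ l, g k l i j := by
    intro g
    calc ∑ i, ∑ j, ∑ k, ∑ l, g i j k l
        = ∑ i, ∑ k, ∑ j, ∑ l, g i j k l := Finset.sum_congr rfl fun i _ => Finset.sum_comm
      _ = ∑ k, ∑ i, ∑ j, ∑ l, g i j k l := Finset.sum_comm
      _ = ∑ k, ∑ i, ∑ l, ∑ j, g i j k l := Finset.sum_congr rfl fun k _ =>
            Finset.sum_congr rfl fun i _ => Finset.sum_comm
      _ = ∑ k, ∑ l, ∑ i, ∑ j, g i j k l := Finset.sum_congr rfl fun k _ => Finset.sum_comm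
  have e1 := swap2 P
  have e2 := rot P
  have e13 := e1.trans (rot (fun i j k l => P j i l k))
  have key : ∑ i, ∑ j, ∑ k, ∑ l,
        (P i j k l + P j i l k + P k l i j + P l k j i)
      = 4 * ∑ i, ∑ j, ∑ k, ∑ l, P i j k l := by
    simp only [Finset.sum_add_distrib]
    rw [← e1, ← e2, ← e13]
    ring
  have key2 : ∑ i, ∑ j, ∑ k, ∑ l, (P i j k l + P j i l k + P k l i j + P l k j i)
      = ∑ i, ∑ j, ∑ k, ∑ l, A i j k l * (M i * M j) * (c i + c j - c k - c l)^2 := by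
    refine Finset.sum_congr rfl fun i _ => Finset.sum_congr rfl fun j _ =>
      Finset.sum_congr rfl fun k _ => Finset.sum_congr rfl fun l _ => ?_
    rw [hP_def]
    simp only
    rw [show A j i l k = A i j k l from by rw [hsym2, hsym1],
        hsym3 i j k l,
        show A l k j i = A i j k l from by rw [hsym2, hsym1, hsym3]]
    linear_combination ((c k + c l) * (c i + c j - c k - c l)) * hMax i j k l
  have hnn : 0 ≤ ∑ i, ∑ j, ∑ k, ∑ l, A i j k l * (M i * M j) * (c i + c j - c k - c l)^2 := by
    refine Finset.sum_nonneg fun i _ => Finset.sum_nonneg fun j _ =>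
      Finset.sum_nonneg fun k _ => Finset.sum_nonneg fun l _ => ?_
    exact mul_nonneg (mul_nonneg (hA i j k l) (mul_nonneg (hM i).le (hM j).le)) (sq_nonneg _)
  nlinarith [key, key2, hnn]
end

section
/- The null space of the linearized collision operator L equals Λ^{1/2}𝕄, i.e. for f ∈ ℝ^m one has Lf = 0 if and only if f = Λ^{1/2}φ for some summational invariant φ. -/
open Finset

noncomputable def psiA {m : ℕ} (α M f : Fin m → ℝ) (i : Fin m) : ℝ :=
  f i / (Real.sqrt (M i / α i) * α i)

lemma psiA_key {m : ℕ} (α M f : Fin m → ℝ) (hα : ∀ i, 0 < α i) (hM : ∀ i, 0 < M i)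
    (i : Fin m) : Real.sqrt (M i / α i) * f i = M i * psiA α M f i := by
  have h2 : Real.sqrt (M i / α i) * Real.sqrt (M i / α i) = M i / α i :=
    Real.mul_self_sqrt (div_pos (hM i) (hα i)).le
  have hspos : 0 < Real.sqrt (M i / α i) := Real.sqrt_pos.2 (div_pos (hM i) (hα i))
  have hane : α i ≠ 0 := (hα i).ne'
  have h1 : Real.sqrt (M i / α i) * α i ≠ 0 := mul_ne_zero hspos.ne' hane
  have h3 : Real.sqrt (M i / α i) * Real.sqrt (M i / α i) * α i = M i := by
    rw [h2, div_mul_cancel₀ _ hane]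
  rw [psiA, ← mul_div_assoc, eq_div_iff h1]
  linear_combination (f i) * h3

lemma Qop_formula {m : ℕ} (α : Fin m → ℝ) (hα : ∀ i, 0 < α i)
    (A : Fin m → Fin m → Fin m → Fin m → ℝ)
    (hsym3 : ∀ i j k l, A k l i j = A i j k l)
    (M : Fin m → ℝ) (hM : ∀ i, 0 < M i)
    (hMax : ∀ i j k l, A i j k l * (M i * M j - M k * M l) = 0)
    (f : Fin m → ℝ) (i : Fin m) :
    Qop α A M (sqrtLam α M f) i
      = (1 / (2 * α i)) * ∑ j, ∑ k, ∑ l,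
          A i j k l * (M i * M j) *
            (psiA α M f k + psiA α M f l - psiA α M f i - psiA α M f j) := by
  simp only [Qop, sqrtLam]
  congr 1
  refine Finset.sum_congr rfl fun j _ => Finset.sum_congr rfl fun k _ =>
    Finset.sum_congr rfl fun l _ => ?_
  rw [hsym3 i j k l, psiA_key α M f hα hM i, psiA_key α M f hα hM j,
    psiA_key α M f hα hM k, psiA_key α M f hα hM l]
  have hMkl : A i j k l * (M k * M l) = A i j k l * (M i * M j) := by
    linear_combination - hMax i j k l
  linear_combination (psiA α M f k + psiA α M f l) * hMkl
lemma sum4_swap_pairs {m : ℕ} (h : Fin m → Fin m → Fin m → Fin m → ℝ) :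
    ∑ i, ∑ j, ∑ k, ∑ l, h i j k l = ∑ i, ∑ j, ∑ k, ∑ l, h k l i j := by
  have := Fintype.sum_equiv (Equiv.prodComm ((Fin m) × (Fin m)) ((Fin m) × (Fin m)))
    (fun p => h p.1.1 p.1.2 p.2.1 p.2.2) (fun p => h p.2.1 p.2.2 p.1.1 p.1.2)
    (fun p => rfl)
  simpa [Fintype.sum_prod_type] using this

lemma sum4_eq_zero {m : ℕ} (h : Fin m → Fin m → Fin m → Fin m → ℝ)
    (hnn : ∀ i j k l, 0 ≤ h i j k l)
    (hz : ∑ i, ∑ j, ∑ k, ∑ l, h i j k l = 0) :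
    ∀ i j k l, h i j k l = 0 := by
  intro i j k l
  have h3 : ∀ i j k, 0 ≤ ∑ l, h i j k l := fun i j k => Finset.sum_nonneg fun l _ => hnn i j k l
  have h2 : ∀ i j, 0 ≤ ∑ k, ∑ l, h i j k l := fun i j => Finset.sum_nonneg fun k _ => h3 i j k
  have h1 : ∀ i, 0 ≤ ∑ j, ∑ k, ∑ l, h i j k l := fun i => Finset.sum_nonneg fun j _ => h2 i j
  have e1 := (Finset.sum_eq_zero_iff_of_nonneg (fun i _ => h1 i)).1 hz i (mem_univ i)
  have e2 := (Finset.sum_eq_zero_iff_of_nonneg (fun j _ => h2 i j)).1 e1 j (mem_univ j)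
  have e3 := (Finset.sum_eq_zero_iff_of_nonneg (fun k _ => h3 i j k)).1 e2 k (mem_univ k)
  exact (Finset.sum_eq_zero_iff_of_nonneg (fun l _ => hnn i j k l)).1 e3 l (mem_univ l)

lemma key_symm {m : ℕ} (c : Fin m → Fin m → Fin m → Fin m → ℝ) (ψ : Fin m → ℝ)
    (hc1 : ∀ i j k l, c i j l k = c i j k l)
    (hc2 : ∀ i j k l, c j i k l = c i j k l)
    (hc3 : ∀ i j k l, c k l i j = c i j k l)
    (hcnn : ∀ i j k l, 0 ≤ c i j k l)
    (hz : ∀ i, ∑ j, ∑ k, ∑ l, c i j k l * (ψ k + ψ l - ψ i - ψ j) = 0) :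
    ∀ i j k l, c i j k l * (ψ k + ψ l - ψ i - ψ j) = 0 := by
  have hF1 : ∑ i, ∑ j, ∑ k, ∑ l, c i j k l * (ψ k + ψ l - ψ i - ψ j) * ψ i = 0 := by
    refine Finset.sum_eq_zero fun i _ => ?_
    calc ∑ j, ∑ k, ∑ l, c i j k l * (ψ k + ψ l - ψ i - ψ j) * ψ i
        = ψ i * ∑ j, ∑ k, ∑ l, c i j k l * (ψ k + ψ l - ψ i - ψ j) := by
          simp only [Finset.mul_sum]
          exact Finset.sum_congr rfl fun j _ => Finset.sum_congr rfl fun k _ =>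
            Finset.sum_congr rfl fun l _ => by ring
      _ = 0 := by rw [hz i, mul_zero]
  have hF2 : ∑ i, ∑ j, ∑ k, ∑ l, c i j k l * (ψ k + ψ l - ψ i - ψ j) * ψ j = 0 := by
    calc ∑ i, ∑ j, ∑ k, ∑ l, c i j k l * (ψ k + ψ l - ψ i - ψ j) * ψ j
        = ∑ i, ∑ j, ∑ k, ∑ l, c j i k l * (ψ k + ψ l - ψ j - ψ i) * ψ i :=
          Finset.sum_comm
      _ = ∑ i, ∑ j, ∑ k, ∑ l, c i j k l * (ψ k + ψ l - ψ i - ψ j) * ψ i := by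
          refine Finset.sum_congr rfl fun i _ => Finset.sum_congr rfl fun j _ =>
            Finset.sum_congr rfl fun k _ => Finset.sum_congr rfl fun l _ => ?_
          rw [hc2]; ring
      _ = 0 := hF1
  have hF3 : ∑ i, ∑ j, ∑ k, ∑ l, c i j k l * (ψ k + ψ l - ψ i - ψ j) * ψ k = 0 := by
    calc ∑ i, ∑ j, ∑ k, ∑ l, c i j k l * (ψ k + ψ l - ψ i - ψ j) * ψ k
        = ∑ i, ∑ j, ∑ k, ∑ l, c k l i j * (ψ i + ψ j - ψ k - ψ l) * ψ i :=
          sum4_swap_pairs _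
      _ = ∑ i, ∑ j, ∑ k, ∑ l, -(c i j k l * (ψ k + ψ l - ψ i - ψ j) * ψ i) := by
          refine Finset.sum_congr rfl fun i _ => Finset.sum_congr rfl fun j _ =>
            Finset.sum_congr rfl fun k _ => Finset.sum_congr rfl fun l _ => ?_
          rw [hc3]; ring
      _ = -∑ i, ∑ j, ∑ k, ∑ l, c i j k l * (ψ k + ψ l - ψ i - ψ j) * ψ i := by
          simp only [Finset.sum_neg_distrib]
      _ = 0 := by rw [hF1, neg_zero]
  have hF4 : ∑ i, ∑ j, ∑ k, ∑ l, c i j k l * (ψ k + ψ l - ψ i - ψ j) * ψ l = 0 := by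
    calc ∑ i, ∑ j, ∑ k, ∑ l, c i j k l * (ψ k + ψ l - ψ i - ψ j) * ψ l
        = ∑ i, ∑ j, ∑ k, ∑ l, c k l i j * (ψ i + ψ j - ψ k - ψ l) * ψ j :=
          sum4_swap_pairs _
      _ = ∑ i, ∑ j, ∑ k, ∑ l, -(c i j k l * (ψ k + ψ l - ψ i - ψ j) * ψ j) := by
          refine Finset.sum_congr rfl fun i _ => Finset.sum_congr rfl fun j _ =>
            Finset.sum_congr rfl fun k _ => Finset.sum_congr rfl fun l _ => ?_
          rw [hc3]; ring
      _ = -∑ i, ∑ j, ∑ k, ∑ l, c i j k l * (ψ k + ψ l - ψ i - ψ j) * ψ j := by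
          simp only [Finset.sum_neg_distrib]
      _ = 0 := by rw [hF2, neg_zero]
  have hD2 : ∑ i, ∑ j, ∑ k, ∑ l,
      c i j k l * ((ψ k + ψ l - ψ i - ψ j) * (ψ k + ψ l - ψ i - ψ j)) = 0 := by
    calc ∑ i, ∑ j, ∑ k, ∑ l,
          c i j k l * ((ψ k + ψ l - ψ i - ψ j) * (ψ k + ψ l - ψ i - ψ j))
        = ∑ i, ∑ j, ∑ k, ∑ l,
            (c i j k l * (ψ k + ψ l - ψ i - ψ j) * ψ k
              + c i j k l * (ψ k + ψ l - ψ i - ψ j) * ψ l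
              - c i j k l * (ψ k + ψ l - ψ i - ψ j) * ψ i
              - c i j k l * (ψ k + ψ l - ψ i - ψ j) * ψ j) := by
          refine Finset.sum_congr rfl fun i _ => Finset.sum_congr rfl fun j _ =>
            Finset.sum_congr rfl fun k _ => Finset.sum_congr rfl fun l _ => by ring
      _ = 0 := by
          simp only [Finset.sum_add_distrib, Finset.sum_sub_distrib]
          rw [hF1, hF2, hF3, hF4]; ring
  intro i j k l
  have hterm := sum4_eq_zero
    (fun i j k l => c i j k l * ((ψ k + ψ l - ψ i - ψ j) * (ψ k + ψ l - ψ i - ψ j)))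
    (fun i j k l => mul_nonneg (hcnn i j k l) (mul_self_nonneg _)) hD2 i j k l
  have hsq : (c i j k l * (ψ k + ψ l - ψ i - ψ j)) ^ 2
      = c i j k l * (c i j k l * ((ψ k + ψ l - ψ i - ψ j) * (ψ k + ψ l - ψ i - ψ j))) := by
    ring
  have h0 : (c i j k l * (ψ k + ψ l - ψ i - ψ j)) ^ 2 = 0 := by rw [hsq, hterm, mul_zero]
  exact pow_eq_zero_iff two_ne_zero |>.1 h0
/-- the null space of `L` equals `Λ^{1/2} 𝕄`: one has `Lf = 0` if and
only if `f = Λ^{1/2} φ` for some summational invariant `φ`. -/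
theorem ker_Lop_eq_sqrtLam_summInv {m : ℕ} (hm : 1 ≤ m)
    (α : Fin m → ℝ) (hα : ∀ i, 0 < α i)
    (A : Fin m → Fin m → Fin m → Fin m → ℝ) (hA : ∀ i j k l, 0 ≤ A i j k l)
    (hsym1 : ∀ i j k l, A i j l k = A i j k l)
    (hsym2 : ∀ i j k l, A j i k l = A i j k l)
    (hsym3 : ∀ i j k l, A k l i j = A i j k l)
    (M : Fin m → ℝ) (hM : ∀ i, 0 < M i)
    (hMax : ∀ i j k l, A i j k l * (M i * M j - M k * M l) = 0)
    (f : Fin m → ℝ) :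
    Lop α A M f = 0 ↔ ∃ φ : Fin m → ℝ, SummInv α A φ ∧ f = sqrtLam α M φ := by
  have hspos : ∀ i : Fin m, 0 < Real.sqrt (M i / α i) :=
    fun i => Real.sqrt_pos.2 (div_pos (hM i) (hα i))
  have hL0 : Lop α A M f = 0 ↔ ∀ i, (∑ j, ∑ k, ∑ l,
      A i j k l * (M i * M j) *
        (psiA α M f k + psiA α M f l - psiA α M f i - psiA α M f j)) = 0 := by
    rw [funext_iff]
    refine forall_congr' fun i => ?_
    have expand : Lop α A M f i
        = (-2 : ℝ) * ((Real.sqrt (M i / α i))⁻¹ * ((1 / (2 * α i)) * ∑ j, ∑ k, ∑ l,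
            A i j k l * (M i * M j) *
              (psiA α M f k + psiA α M f l - psiA α M f i - psiA α M f j))) := by
      simp only [Lop, Pi.smul_apply, smul_eq_mul, invSqrtLam]
      rw [Qop_formula α hα A hsym3 M hM hMax f i]
    rw [expand, Pi.zero_apply]
    have hc : ((-2 : ℝ) * ((Real.sqrt (M i / α i))⁻¹ * (1 / (2 * α i)))) ≠ 0 := by
      have h1 : (Real.sqrt (M i / α i))⁻¹ ≠ 0 := inv_ne_zero (hspos i).ne'
      have h2 : (1 / (2 * α i)) ≠ 0 := by
        have := hα i; positivity
      exact mul_ne_zero (by norm_num) (mul_ne_zero h1 h2)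
    constructor
    · intro h
      have h' : ((-2 : ℝ) * ((Real.sqrt (M i / α i))⁻¹ * (1 / (2 * α i)))) * (∑ j, ∑ k, ∑ l,
          A i j k l * (M i * M j) *
            (psiA α M f k + psiA α M f l - psiA α M f i - psiA α M f j)) = 0 := by
        linear_combination h
      exact (mul_eq_zero.1 h').resolve_left hc
    · intro h
      rw [h]; ring
  rw [hL0]
  constructor
  · intro h
    have hAD := key_symm (fun i j k l => A i j k l * (M i * M j)) (psiA α M f)
      (fun i j k l => by
        show A i j l k * (M i * M j) = A i j k l * (M i * M j)
        rw [hsym1])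
      (fun i j k l => by
        show A j i k l * (M j * M i) = A i j k l * (M i * M j)
        rw [hsym2]; ring)
      (fun i j k l => by
        show A k l i j * (M k * M l) = A i j k l * (M i * M j)
        rw [hsym3]; linear_combination - hMax i j k l)
      (fun i j k l => mul_nonneg (hA i j k l) (mul_pos (hM i) (hM j)).le)
      h
    refine ⟨fun i => f i / Real.sqrt (M i / α i), ?_, ?_⟩
    · intro i j k l
      show A i j k l * (f i / Real.sqrt (M i / α i) / α i + f j / Real.sqrt (M j / α j) / α j
        - f k / Real.sqrt (M k / α k) / α k - f l / Real.sqrt (M l / α l) / α l) = 0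
      have hψ : ∀ i, f i / Real.sqrt (M i / α i) / α i = psiA α M f i := fun i => by
        rw [psiA, div_div]
      rw [hψ i, hψ j, hψ k, hψ l]
      have h1 := hAD i j k l
      have h2 : (M i * M j) * (A i j k l *
          (psiA α M f i + psiA α M f j - psiA α M f k - psiA α M f l)) = 0 := by
        linear_combination - h1
      have hMM : (M i * M j) ≠ 0 := (mul_pos (hM i) (hM j)).ne'
      exact (mul_eq_zero.1 h2).resolve_left hMM
    · funext i
      show f i = Real.sqrt (M i / α i) * (f i / Real.sqrt (M i / α i))
      rw [mul_comm, div_mul_cancel₀ _ (hspos i).ne']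
  · rintro ⟨φ, hφ, rfl⟩
    intro i
    refine Finset.sum_eq_zero fun j _ => Finset.sum_eq_zero fun k _ =>
      Finset.sum_eq_zero fun l _ => ?_
    have hψφ : ∀ i, psiA α M (sqrtLam α M φ) i = φ i / α i := by
      intro i
      simp only [psiA, sqrtLam]
      rw [mul_div_mul_left _ _ (hspos i).ne']
    rw [hψφ i, hψφ j, hψφ k, hψφ l]
    linear_combination (-(M i * M j)) * hφ i j k l
end
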